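/- Let Ω = 𝕋 × ℝ and let (ρ, u) be a sufficiently smooth solution of (HINS) on [0,T] with ρ, ∇ρ bounded and u Lipschitz in space uniformly in time. Then there is a universal constant C such that for every t ∈ [0,T] the oscillation of the density satisfies ‖ρ_≠(t)‖_{L^∞(Ω)} ≤ ‖ρ_{0,≠}‖_{L^∞(Ω)} + C ∫₀^t ‖u_≠(s)‖_{L^∞(Ω)} ‖∇ρ(s)‖_{L^∞(Ω)} ds. -/

import Mathlib

/- STATEMENT 17: For a sufficiently smooth solution (ρ,u) of (HINS) on [0,T] × (𝕋×ℝ)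
with ρ, ∇ρ bounded and u Lipschitz in space uniformly in time, there is a universal
constant C such that ‖ρ_≠(t)‖_{L^∞} ≤ ‖ρ_{0,≠}‖_{L^∞} + C∫₀ᵗ‖u_≠(s)‖_{L^∞}‖∇ρ(s)‖_{L^∞} ds.
Functions on 𝕋 × ℝ are represented by 1-periodic functions in the first variable,
with μΩ = volume restricted to [0,1) × ℝ. -/

noncomputable section

open MeasureTheory Set
open scoped ENNReal NNReal

abbrev Pt : Type := ℝ × ℝ

def pd1 (f : Pt → ℝ) (x : Pt) : ℝ := deriv (fun s => f (s, x.2)) x.1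
def pd2 (f : Pt → ℝ) (x : Pt) : ℝ := deriv (fun s => f (x.1, s)) x.2
def c1 (w : Pt → Pt) : Pt → ℝ := fun x => (w x).1
def c2 (w : Pt → Pt) : Pt → ℝ := fun x => (w x).2

/-- 1-periodicity in the first variable: represents functions on 𝕋 × ℝ, 𝕋 = ℝ/ℤ -/
def Per (f : Pt → ℝ) : Prop := ∀ x : Pt, f (x.1 + 1, x.2) = f x

/-- horizontal average f̄ -/
def hav (f : Pt → ℝ) (x : Pt) : ℝ := ∫ s in (0:ℝ)..1, f (s, x.2)

/-- oscillation part f_≠ = f − f̄ -/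
def osc (f : Pt → ℝ) (x : Pt) : ℝ := f x - hav f x

/-- the measure representing 𝕋 × ℝ -/
def μΩ : Measure Pt := volume.restrict (Set.Ico (0:ℝ) 1 ×ˢ Set.univ)

/-- the (HINS) system on the time set S: transport, horizontally dissipated momentum,
incompressibility, periodicity and the initial conditions. -/
structure IsHINSOn (ρ : ℝ → Pt → ℝ) (u : ℝ → Pt → Pt) (P : ℝ → Pt → ℝ)
    (ρ₀ : Pt → ℝ) (u₀ : Pt → Pt) (S : Set ℝ) : Prop where
  per_ρ : ∀ t ∈ S, Per (ρ t)
  per_u1 : ∀ t ∈ S, Per (c1 (u t))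
  per_u2 : ∀ t ∈ S, Per (c2 (u t))
  per_P : ∀ t ∈ S, Per (P t)
  transport : ∀ t ∈ S, ∀ x : Pt,
    deriv (fun s => ρ s x) t + (u t x).1 * pd1 (ρ t) x + (u t x).2 * pd2 (ρ t) x = 0
  momentum1 : ∀ t ∈ S, ∀ x : Pt,
    ρ t x * (deriv (fun s => (u s x).1) t
        + (u t x).1 * pd1 (c1 (u t)) x + (u t x).2 * pd2 (c1 (u t)) x)
      - pd1 (pd1 (c1 (u t))) x + pd1 (P t) x = 0
  momentum2 : ∀ t ∈ S, ∀ x : Pt,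
    ρ t x * (deriv (fun s => (u s x).2) t
        + (u t x).1 * pd1 (c2 (u t)) x + (u t x).2 * pd2 (c2 (u t)) x)
      - pd1 (pd1 (c2 (u t))) x + pd2 (P t) x = 0
  incomp : ∀ t ∈ S, ∀ x : Pt, pd1 (c1 (u t)) x + pd2 (c2 (u t)) x = 0
  init_ρ : ρ 0 = ρ₀
  init_u : u 0 = u₀

/-!
Fix `t` and `x`, and follow the backward characteristic `γ` of `u` ending at `(t, x)`; it exists
on `[0, t]` because `u` is Lipschitz in space. The density is constant along `γ`, so
`ρ_≠(t, x) = ρ_{0,≠}(γ 0) - (Ψ t - Ψ 0)` with `Ψ s = ρ̄(s, γ₂ s)`. Differentiating under the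
integral and using the transport equation,
`Ψ' = ∫_𝕋 (-u₁ ∂₁ρ + (u₂(γ) - u₂) ∂₂ρ)`: the mean of `u₁` multiplies `∫_𝕋 ∂₁ρ = 0`, and
`u₂(γ) - u₂ = u₂,≠(γ) - u₂,≠` because both points lie on the same horizontal line. Hence
`|Ψ'| ≤ 3 ‖u_≠‖_∞ ‖∇ρ‖_∞`. Finally, for continuous periodic functions the essential supremum
over `[0, 1) × ℝ` bounds every value.
-/

open Function Filter

lemma apply_fract_eq_of_periodic {E : Type*} {g : Pt → E}
    (hper : ∀ x : Pt, g (x.1 + 1, x.2) = g x) (x : Pt) :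
    g (Int.fract x.1, x.2) = g x := by
  have hp : Periodic (fun σ => g (σ, x.2)) 1 := fun σ => hper (σ, x.2)
  have h := hp.sub_int_mul_eq (x := x.1) ⌊x.1⌋
  rwa [mul_one, Int.self_sub_floor] at h

lemma enorm_le_eLpNorm_top_of_periodic {E : Type*} [NormedAddCommGroup E] {g : Pt → E}
    (hg : Continuous g) (hper : ∀ x : Pt, g (x.1 + 1, x.2) = g x) (x : Pt) :
    ‖g x‖ₑ ≤ eLpNorm g ⊤ μΩ := by
  have hae : ∀ᵐ y ∂μΩ, ‖g y‖ₑ ≤ eLpNorm g ⊤ μΩ := by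
    rw [eLpNorm_exponent_top]; exact ae_le_eLpNormEssSup
  set C := eLpNorm g ⊤ μΩ
  have hnull : μΩ {y | C < ‖g y‖ₑ} = 0 := by
    simpa only [not_le] using ae_iff.1 hae
  -- a nonempty open subset of the open strip would have positive measure
  have hstrip : Ioo (0:ℝ) 1 ×ˢ univ ⊆ {y : Pt | ‖g y‖ₑ ≤ C} := by
    intro y hy
    by_contra hlt
    have hU : IsOpen ({y : Pt | C < ‖g y‖ₑ} ∩ Ioo (0:ℝ) 1 ×ˢ univ) :=
      (isOpen_lt continuous_const hg.enorm).inter (isOpen_Ioo.prod isOpen_univ)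
    refine (hU.measure_pos volume ⟨y, (not_le.1 hlt : C < ‖g y‖ₑ), hy⟩).ne'
      (le_antisymm ?_ bot_le)
    calc volume ({y : Pt | C < ‖g y‖ₑ} ∩ Ioo (0:ℝ) 1 ×ˢ univ)
        ≤ volume ({y : Pt | C < ‖g y‖ₑ} ∩ Ico (0:ℝ) 1 ×ˢ univ) :=
          measure_mono (inter_subset_inter_right _ (prod_mono Ioo_subset_Ico_self le_rfl))
      _ = 0 := by
          rwa [μΩ, Measure.restrict_apply (isOpen_lt continuous_const hg.enorm).measurableSet]
            at hnull
  have hclosure : Icc (0:ℝ) 1 ×ˢ univ ⊆ {y : Pt | ‖g y‖ₑ ≤ C} := by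
    rw [← closure_Ioo zero_ne_one, ← closure_univ, ← closure_prod_eq]
    exact (isClosed_le hg.enorm continuous_const).closure_subset_iff.2 hstrip
  rw [← apply_fract_eq_of_periodic hper x]
  exact hclosure ⟨⟨Int.fract_nonneg _, (Int.fract_lt_one _).le⟩, mem_univ _⟩

lemma Per.osc {f : Pt → ℝ} (hf : Per f) : Per (osc f) := fun x => by
  rw [_root_.osc, _root_.osc, hf x]; rfl

lemma Per.pd1 {f : Pt → ℝ} (hf : Per f) : Per (pd1 f) := fun x => by
  rw [_root_.pd1, _root_.pd1, ← deriv_comp_add_const]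
  exact congrArg (deriv · x.1) (funext fun σ => hf (σ, x.2))

lemma Per.pd2 {f : Pt → ℝ} (hf : Per f) : Per (pd2 f) := fun x =>
  congrArg (deriv · x.2) (funext fun σ => hf (x.1, σ))

lemma Continuous.hav {f : Pt → ℝ} (hf : Continuous f) : Continuous (hav f) := by
  unfold _root_.hav; fun_prop

lemma Continuous.osc {f : Pt → ℝ} (hf : Continuous f) : Continuous (osc f) :=
  hf.sub hf.hav

lemma hasDerivAt_pd1 {f : Pt → ℝ} {x : Pt} (hf : DifferentiableAt ℝ f x) :
    HasDerivAt (fun σ => f (σ, x.2)) (fderiv ℝ f x (1, 0)) x.1 :=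
  hf.hasFDerivAt.comp_hasDerivAt x.1 ((hasDerivAt_id x.1).prodMk (hasDerivAt_const x.1 x.2))

lemma hasDerivAt_pd2 {f : Pt → ℝ} {x : Pt} (hf : DifferentiableAt ℝ f x) :
    HasDerivAt (fun σ => f (x.1, σ)) (fderiv ℝ f x (0, 1)) x.2 :=
  hf.hasFDerivAt.comp_hasDerivAt x.2 ((hasDerivAt_const x.2 x.1).prodMk (hasDerivAt_id x.2))

lemma pd1_eq_fderiv {f : Pt → ℝ} {x : Pt} (hf : DifferentiableAt ℝ f x) :
    pd1 f x = fderiv ℝ f x (1, 0) :=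
  (hasDerivAt_pd1 hf).deriv

lemma pd2_eq_fderiv {f : Pt → ℝ} {x : Pt} (hf : DifferentiableAt ℝ f x) :
    pd2 f x = fderiv ℝ f x (0, 1) :=
  (hasDerivAt_pd2 hf).deriv

lemma ContDiff.continuous_pd1 {f : Pt → ℝ} (hf : ContDiff ℝ 1 f) : Continuous (pd1 f) := by
  rw [show pd1 f = fun x => fderiv ℝ f x (1, 0) from
    funext fun x => pd1_eq_fderiv (hf.differentiable one_ne_zero x)]
  exact (hf.continuous_fderiv one_ne_zero).clm_apply continuous_const

lemma ContDiff.continuous_pd2 {f : Pt → ℝ} (hf : ContDiff ℝ 1 f) : Continuous (pd2 f) := by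
  rw [show pd2 f = fun x => fderiv ℝ f x (0, 1) from
    funext fun x => pd2_eq_fderiv (hf.differentiable one_ne_zero x)]
  exact (hf.continuous_fderiv one_ne_zero).clm_apply continuous_const

lemma integral_pd1_eq_zero {f : Pt → ℝ} (hf : ContDiff ℝ 1 f) (hper : Per f) (z : ℝ) :
    ∫ σ in (0:ℝ)..1, pd1 f (σ, z) = 0 := by
  have hderiv : ∀ σ ∈ uIcc (0:ℝ) 1, HasDerivAt (fun σ => f (σ, z)) (pd1 f (σ, z)) σ :=
    fun σ _ => by
      rw [pd1_eq_fderiv (hf.differentiable one_ne_zero _)]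
      exact hasDerivAt_pd1 (x := (σ, z)) (hf.differentiable one_ne_zero _)
  have hint : IntervalIntegrable (fun σ => pd1 f (σ, z)) volume 0 1 :=
    (hf.continuous_pd1.comp (continuous_id.prodMk continuous_const)).intervalIntegrable _ _
  rw [intervalIntegral.integral_eq_sub_of_hasDerivAt hderiv hint, sub_eq_zero]
  simpa using hper (0, z)

section IntegralCurve

variable {E : Type*} [NormedAddCommGroup E] [NormedSpace ℝ E] {v : ℝ → E → E}

lemma hasDerivWithinAt_of_notMem_closure {f : ℝ → E} {f' : E} {s : Set ℝ} {x : ℝ}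
    (h : x ∉ closure s) : HasDerivWithinAt f f' s x :=
  hasDerivWithinAt_iff_hasFDerivWithinAt.2 (.of_notMem_closure h)

lemma IsIntegralCurveOn.piecewise_Icc {γ₁ γ₂ : ℝ → E} {a m b : ℝ} (ham : a ≤ m) (hmb : m ≤ b)
    (h₁ : IsIntegralCurveOn γ₁ v (Icc a m)) (h₂ : IsIntegralCurveOn γ₂ v (Icc m b))
    (hm : γ₁ m = γ₂ m) :
    IsIntegralCurveOn (fun s => if s < m then γ₁ s else γ₂ s) v (Icc a b) := by
  set γ := fun s => if s < m then γ₁ s else γ₂ s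
  have e₁ : EqOn γ γ₁ (Icc a m) := fun s hs => by
    rcases hs.2.lt_or_eq with hlt | rfl
    · exact if_pos hlt
    · exact (if_neg (lt_irrefl s)).trans hm.symm
  have e₂ : EqOn γ γ₂ (Icc m b) := fun s hs => if_neg (not_lt.2 hs.1)
  have k₁ : ∀ s, HasDerivWithinAt γ (v s (γ s)) (Icc a m) s := fun s => by
    by_cases hs : s ∈ Icc a m
    · rw [e₁ hs]; exact (h₁ s hs).congr e₁ (e₁ hs)
    · exact hasDerivWithinAt_of_notMem_closure (by rwa [closure_Icc])
  have k₂ : ∀ s, HasDerivWithinAt γ (v s (γ s)) (Icc m b) s := fun s => by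
    by_cases hs : s ∈ Icc m b
    · rw [e₂ hs]; exact (h₂ s hs).congr e₂ (e₂ hs)
    · exact hasDerivWithinAt_of_notMem_closure (by rwa [closure_Icc])
  intro s _
  rw [← Icc_union_Icc_eq_Icc ham hmb]
  exact (k₁ s).union (k₂ s)

variable [CompleteSpace E] {L : ℝ≥0} {a b : ℝ}

lemma exists_isIntegralCurveOn_Icc_of_mul_le_one (hab : a ≤ b) (hlen : (b - a) * (L + 1) ≤ 1)
    (hcont : ∀ x, ContinuousOn (v · x) (Icc a b)) (hlip : ∀ t ∈ Icc a b, LipschitzWith L (v t))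
    (x : E) : ∃ γ : ℝ → E, γ b = x ∧ IsIntegralCurveOn γ v (Icc a b) := by
  obtain ⟨A, hA⟩ := isCompact_Icc.exists_bound_of_continuousOn (hcont x)
  have hA0 : 0 ≤ A := (norm_nonneg _).trans (hA b ⟨hab, le_rfl⟩)
  -- by linear growth, `v` is bounded by `(A + 1) * (L + 1)` on the ball of radius `A + 1`
  -- around `x`, which a curve of that speed cannot leave within time `(L + 1)⁻¹`
  have hpl : IsPicardLindelof v (⟨b, hab, le_rfl⟩ : Icc a b) x ⟨A + 1, by positivity⟩ 0
      ⟨(A + 1) * (L + 1), by positivity⟩ L := by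
    refine ⟨fun t ht => (hlip t ht).lipschitzOnWith, fun y _ => hcont y, fun t ht y hy => ?_, ?_⟩
    · have hy : ‖y - x‖ ≤ A + 1 := by rwa [Metric.mem_closedBall, dist_eq_norm] at hy
      have hL : ‖v t y - v t x‖ ≤ L * ‖y - x‖ := by
        simpa only [dist_eq_norm] using (hlip t ht).dist_le_mul y x
      calc ‖v t y‖ ≤ ‖v t x‖ + ‖v t y - v t x‖ := norm_le_insert' _ _
        _ ≤ A + L * (A + 1) :=
          add_le_add (hA t ht) (hL.trans (mul_le_mul_of_nonneg_left hy L.2))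
        _ ≤ (A + 1) * (L + 1) := by nlinarith [L.2]
    · change (A + 1) * (L + 1) * max (b - b) (b - a) ≤ (A + 1) - 0
      rw [sub_self, max_eq_right (sub_nonneg.2 hab), sub_zero, mul_assoc]
      exact mul_le_of_le_one_right (by positivity) (by linarith)
  exact hpl.exists_eq_forall_mem_Icc_hasDerivWithinAt₀

theorem exists_isIntegralCurveOn_Icc (hab : a ≤ b)
    (hcont : ∀ x, ContinuousOn (v · x) (Icc a b)) (hlip : ∀ t ∈ Icc a b, LipschitzWith L (v t))
    (x : E) : ∃ γ : ℝ → E, γ b = x ∧ IsIntegralCurveOn γ v (Icc a b) := by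
  obtain ⟨n, hn⟩ := exists_nat_ge ((b - a) * (L + 1))
  induction n generalizing b x with
  | zero =>
    exact exists_isIntegralCurveOn_Icc_of_mul_le_one hab (hn.trans (by simp))
      hcont hlip x
  | succ n ih =>
    -- glue a solution on `[m, b]`, `b - m ≤ (L + 1)⁻¹`, to one on `[a, m]` given by induction
    have hL : (0 : ℝ) < L + 1 := by positivity
    set m := max a (b - (L + 1 : ℝ)⁻¹) with hm
    have ham : a ≤ m := le_max_left _ _
    have hmb : m ≤ b := max_le hab (by linarith [inv_pos.2 hL])
    have hbm : (b - m) * (L + 1) ≤ 1 := by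
      have : b - m ≤ (L + 1 : ℝ)⁻¹ := by linarith [le_max_right a (b - (L + 1 : ℝ)⁻¹)]
      simpa [inv_mul_cancel₀ hL.ne'] using mul_le_mul_of_nonneg_right this hL.le
    have hma : (m - a) * (L + 1) ≤ n := by
      rcases le_total a (b - (L + 1 : ℝ)⁻¹) with h | h
      · rw [hm, max_eq_right h, show b - (L + 1 : ℝ)⁻¹ - a = (b - a) - (L + 1 : ℝ)⁻¹ by ring,
          sub_mul, inv_mul_cancel₀ hL.ne']
        push_cast at hn
        linarith
      · rw [hm, max_eq_left h, sub_self, zero_mul]; positivity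
    obtain ⟨γ₂, hγ₂b, hγ₂⟩ := exists_isIntegralCurveOn_Icc_of_mul_le_one hmb hbm
      (fun y => (hcont y).mono (Icc_subset_Icc_left ham))
      (fun t ht => hlip t ⟨ham.trans ht.1, ht.2⟩) x
    obtain ⟨γ₁, hγ₁m, hγ₁⟩ := ih ham (fun y => (hcont y).mono (Icc_subset_Icc_right hmb))
      (fun t ht => hlip t ⟨ht.1, ht.2.trans hmb⟩) (γ₂ m) hma
    exact ⟨_, by simp [not_lt.2 hmb, hγ₂b], hγ₁.piecewise_Icc ham hmb hγ₂ hγ₁m⟩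

end IntegralCurve

theorem hasFDerivAt_intervalIntegral_of_continuous {H E : Type*} [NormedAddCommGroup H]
    [NormedSpace ℝ H] [ProperSpace H] [NormedAddCommGroup E] [NormedSpace ℝ E]
    {f : H → ℝ → E} {f' : H → ℝ → H →L[ℝ] E} (hf : Continuous (uncurry f))
    (hf' : Continuous (uncurry f')) (hderiv : ∀ x σ, HasFDerivAt (f · σ) (f' x σ) x)
    (a b : ℝ) (x₀ : H) :
    HasFDerivAt (fun x => ∫ σ in a..b, f x σ) (∫ σ in a..b, f' x₀ σ) x₀ := by
  obtain ⟨K, hK⟩ := ((isCompact_closedBall x₀ 1).prod isCompact_uIcc).exists_bound_of_continuousOn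
    hf'.continuousOn
  have hslice : ∀ x, Continuous (f x) := fun x => hf.comp (continuous_const.prodMk continuous_id)
  refine hasFDerivAt_integral_of_dominated_of_fderiv_le'' (bound := fun _ => K)
    (Metric.ball_mem_nhds x₀ one_pos)
    (Eventually.of_forall fun x => (hslice x).aestronglyMeasurable)
    ((hslice x₀).intervalIntegrable _ _)
    (hf'.comp (continuous_const.prodMk continuous_id)).aestronglyMeasurable ?_
    intervalIntegrable_const (ae_of_all _ fun σ x _ => hderiv x σ)
  exact (ae_restrict_iff' measurableSet_uIoc).2 (ae_of_all _ fun σ hσ x hx =>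
    hK (x, σ) ⟨Metric.ball_subset_closedBall hx, uIoc_subset_uIcc hσ⟩)

lemma enorm_intervalIntegral_le_lintegral {E : Type*} [NormedAddCommGroup E] [NormedSpace ℝ E]
    {f : ℝ → E} {a b : ℝ} (hab : a ≤ b) :
    ‖∫ σ in a..b, f σ‖ₑ ≤ ∫⁻ σ in Ioc a b, ‖f σ‖ₑ := by
  rw [intervalIntegral.integral_of_le hab]
  exact enorm_integral_le_lintegral_enorm _

lemma fderiv_uncurry_apply {f : ℝ → Pt → ℝ} {s : ℝ} {x : Pt}
    (hf : DifferentiableAt ℝ (uncurry f) (s, x)) (c : ℝ) (v : Pt) :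
    fderiv ℝ (uncurry f) (s, x) (c, v)
      = c * deriv (fun τ => f τ x) s + v.1 * pd1 (f s) x + v.2 * pd2 (f s) x := by
  set D := fderiv ℝ (uncurry f) (s, x)
  have ht : HasDerivAt (fun τ => f τ x) (D (1, 0)) s := by
    have := hf.hasFDerivAt.comp_hasDerivAt s ((hasDerivAt_id s).prodMk (hasDerivAt_const s x))
    exact this
  have h1 : HasDerivAt (fun σ => f s (σ, x.2)) (D (0, (1, 0))) x.1 := by
    have := hf.hasFDerivAt.comp_hasDerivAt x.1 ((hasDerivAt_const x.1 s).prodMk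
      ((hasDerivAt_id x.1).prodMk (hasDerivAt_const x.1 x.2)))
    exact this
  have h2 : HasDerivAt (fun σ => f s (x.1, σ)) (D (0, (0, 1))) x.2 := by
    have := hf.hasFDerivAt.comp_hasDerivAt x.2 ((hasDerivAt_const x.2 s).prodMk
      ((hasDerivAt_const x.2 x.1).prodMk (hasDerivAt_id x.2)))
    exact this
  have hcv : ((c, v) : ℝ × Pt) = c • (1, 0) + v.1 • (0, (1, 0)) + v.2 • (0, (0, 1)) := by
    ext <;> simp
  rw [ht.deriv, pd1, h1.deriv, pd2, h2.deriv, hcv, map_add, map_add, map_smul, map_smul, map_smul]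
  simp only [smul_eq_mul]

lemma enorm_fst_le {α β : Type*} [NormedAddCommGroup α] [NormedAddCommGroup β] (p : α × β) :
    ‖p.1‖ₑ ≤ ‖p‖ₑ := by
  simpa only [ofReal_norm] using ENNReal.ofReal_le_ofReal (norm_fst_le p)

lemma enorm_snd_le {α β : Type*} [NormedAddCommGroup α] [NormedAddCommGroup β] (p : α × β) :
    ‖p.2‖ₑ ≤ ‖p‖ₑ := by
  simpa only [ofReal_norm] using ENNReal.ofReal_le_ofReal (norm_snd_le p)

section Transport

variable {ρ : ℝ → Pt → ℝ} {u : ℝ → Pt → Pt}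

lemma fderiv_uncurry_apply_of_transport {s : ℝ} {x : Pt}
    (hρ : DifferentiableAt ℝ (uncurry ρ) (s, x))
    (htr : deriv (fun τ => ρ τ x) s + (u s x).1 * pd1 (ρ s) x + (u s x).2 * pd2 (ρ s) x = 0)
    (v : Pt) :
    fderiv ℝ (uncurry ρ) (s, x) (1, v)
      = (v.1 - (u s x).1) * pd1 (ρ s) x + (v.2 - (u s x).2) * pd2 (ρ s) x := by
  rw [fderiv_uncurry_apply hρ]
  linear_combination htr

lemma apply_eq_of_isIntegralCurveOn {γ : ℝ → Pt} {t : ℝ} (ht : 0 ≤ t)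
    (hρ : Differentiable ℝ (uncurry ρ))
    (htr : ∀ s ∈ Icc 0 t, ∀ x,
      deriv (fun τ => ρ τ x) s + (u s x).1 * pd1 (ρ s) x + (u s x).2 * pd2 (ρ s) x = 0)
    (hγ : IsIntegralCurveOn γ u (Icc 0 t)) :
    ρ t (γ t) = ρ 0 (γ 0) := by
  have hderiv : ∀ s ∈ Icc 0 t, HasDerivWithinAt (fun s => ρ s (γ s)) 0 (Icc 0 t) s :=
    fun s hs => by
      have h := (hρ (s, γ s)).hasFDerivAt.comp_hasDerivWithinAt s
        ((hasDerivWithinAt_id s _).prodMk (hγ s hs))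
      rwa [fderiv_uncurry_apply_of_transport (hρ _) (htr s hs (γ s)), sub_self, sub_self,
        zero_mul, zero_mul, add_zero] at h
  simpa [sub_eq_zero] using
    norm_image_sub_le_of_norm_deriv_le_segment' hderiv (C := 0) (by simp) t ⟨ht, le_rfl⟩

lemma hasDerivWithinAt_hav_comp (hρ : ContDiff ℝ 1 (uncurry ρ)) {γ : ℝ → Pt} {w : Pt}
    {S : Set ℝ} {s : ℝ} (hγ : HasDerivWithinAt γ w S s) :
    HasDerivWithinAt (fun τ => hav (ρ τ) (γ τ))
      (∫ σ in (0:ℝ)..1, fderiv ℝ (uncurry ρ) (s, (σ, (γ s).2)) (1, (0, w.2))) S s := by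
  let J : ℝ × ℝ →L[ℝ] ℝ × Pt :=
    (ContinuousLinearMap.fst ℝ ℝ ℝ).prod ((0 : ℝ × ℝ →L[ℝ] ℝ).prod (ContinuousLinearMap.snd ℝ ℝ ℝ))
  have hD : Continuous (fderiv ℝ (uncurry ρ)) := hρ.continuous_fderiv one_ne_zero
  have hι : Continuous fun p : (ℝ × ℝ) × ℝ => (p.1.1, (p.2, p.1.2)) := by fun_prop
  have hG := hasFDerivAt_intervalIntegral_of_continuous
    (f := fun (q : ℝ × ℝ) σ => ρ q.1 (σ, q.2))
    (f' := fun q σ => (fderiv ℝ (uncurry ρ) (q.1, (σ, q.2))).comp J)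
    (hρ.continuous.comp hι) ((hD.comp hι).clm_comp continuous_const)
    (fun q σ => (hρ.differentiable one_ne_zero _).hasFDerivAt.comp q
      (hasFDerivAt_fst.prodMk ((hasFDerivAt_const σ q).prodMk hasFDerivAt_snd))) 0 1
    (s, (γ s).2)
  have hz : HasDerivWithinAt (fun τ => (γ τ).2) w.2 S s := by
    have := hasFDerivAt_snd.comp_hasDerivWithinAt s hγ
    exact this
  have h := hG.comp_hasDerivWithinAt s ((hasDerivWithinAt_id s S).prodMk hz)
  rw [ContinuousLinearMap.intervalIntegral_apply
    (((hD.comp (by fun_prop)).clm_comp continuous_const).intervalIntegrable _ _)] at h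
  exact h

lemma enorm_integral_fderiv_le_of_transport (hρ : ContDiff ℝ 1 (uncurry ρ))
    (hu : Continuous (uncurry u)) {s : ℝ} (htr : ∀ x,
      deriv (fun τ => ρ τ x) s + (u s x).1 * pd1 (ρ s) x + (u s x).2 * pd2 (ρ s) x = 0)
    (hperρ : Per (ρ s)) (hper₁ : Per (c1 (u s))) (hper₂ : Per (c2 (u s))) (y : Pt) :
    ‖∫ σ in (0:ℝ)..1, fderiv ℝ (uncurry ρ) (s, (σ, y.2)) (1, (0, (u s y).2))‖ₑ
      ≤ 3 * (eLpNorm (fun x => (osc (c1 (u s)) x, osc (c2 (u s)) x)) ⊤ μΩ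
        * eLpNorm (fun x => (pd1 (ρ s) x, pd2 (ρ s) x)) ⊤ μΩ) := by
  set A := eLpNorm (fun x => (osc (c1 (u s)) x, osc (c2 (u s)) x)) ⊤ μΩ
  set B := eLpNorm (fun x => (pd1 (ρ s) x, pd2 (ρ s) x)) ⊤ μΩ
  have hρs : ContDiff ℝ 1 (ρ s) := hρ.comp (contDiff_const.prodMk contDiff_id)
  have hus : Continuous (u s) := hu.comp (continuous_const.prodMk continuous_id)
  have ho₁ : Continuous (osc (c1 (u s))) := (continuous_fst.comp hus).osc
  have ho₂ : Continuous (osc (c2 (u s))) := (continuous_snd.comp hus).osc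
  have hp₁ := hρs.continuous_pd1
  have hp₂ := hρs.continuous_pd2
  have hA : ∀ x, ‖osc (c1 (u s)) x‖ₑ ≤ A ∧ ‖osc (c2 (u s)) x‖ₑ ≤ A := fun x => by
    have h := enorm_le_eLpNorm_top_of_periodic (ho₁.prodMk ho₂)
      (fun x => Prod.ext (hper₁.osc x) (hper₂.osc x)) x
    exact ⟨(enorm_fst_le _).trans h, (enorm_snd_le _).trans h⟩
  have hB : ∀ x, ‖pd1 (ρ s) x‖ₑ ≤ B ∧ ‖pd2 (ρ s) x‖ₑ ≤ B := fun x => by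
    have h := enorm_le_eLpNorm_top_of_periodic (hp₁.prodMk hp₂)
      (fun x => Prod.ext (hperρ.pd1 x) (hperρ.pd2 x)) x
    exact ⟨(enorm_fst_le _).trans h, (enorm_snd_le _).trans h⟩
  set g : ℝ → ℝ := fun σ => -osc (c1 (u s)) (σ, y.2) * pd1 (ρ s) (σ, y.2)
    + (osc (c2 (u s)) y - osc (c2 (u s)) (σ, y.2)) * pd2 (ρ s) (σ, y.2)
  have hsplit : ∀ σ, fderiv ℝ (uncurry ρ) (s, (σ, y.2)) (1, (0, (u s y).2))
      = g σ - hav (c1 (u s)) y * pd1 (ρ s) (σ, y.2) := fun σ => by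
    have hav_eq : ∀ f, hav f (σ, y.2) = hav f y := fun f => rfl
    rw [fderiv_uncurry_apply_of_transport (hρ.differentiable one_ne_zero _) (htr _)]
    simp only [g, osc, hav_eq, c1, c2]
    ring
  have hg : Continuous g := by
    simp only [g]
    fun_prop
  have hmean : Continuous fun σ => hav (c1 (u s)) y * pd1 (ρ s) (σ, y.2) := by fun_prop
  -- the mean of `u₁` drops out because `∂₁ρ` has mean zero over a period
  rw [intervalIntegral.integral_congr (fun σ _ => hsplit σ),
    intervalIntegral.integral_sub (hg.intervalIntegrable _ _) (hmean.intervalIntegrable _ _),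
    intervalIntegral.integral_const_mul, integral_pd1_eq_zero hρs hperρ, mul_zero, sub_zero]
  calc ‖∫ σ in (0:ℝ)..1, g σ‖ₑ ≤ ∫⁻ σ in Ioc (0:ℝ) 1, ‖g σ‖ₑ :=
        enorm_intervalIntegral_le_lintegral zero_le_one
    _ ≤ ∫⁻ _ in Ioc (0:ℝ) 1, 3 * (A * B) := lintegral_mono fun σ => ?_
    _ = 3 * (A * B) := by simp
  calc ‖g σ‖ₑ ≤ ‖osc (c1 (u s)) (σ, y.2)‖ₑ * ‖pd1 (ρ s) (σ, y.2)‖ₑ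
        + (‖osc (c2 (u s)) y‖ₑ + ‖osc (c2 (u s)) (σ, y.2)‖ₑ) * ‖pd2 (ρ s) (σ, y.2)‖ₑ := by
        refine (enorm_add_le _ _).trans (add_le_add ?_ ?_)
        · rw [enorm_mul, enorm_neg]
        · rw [enorm_mul]; gcongr; exact enorm_sub_le
    _ ≤ A * B + (A + A) * B := by
        gcongr
        exacts [(hA _).1, (hB _).1, (hA _).2, (hA _).2, (hB _).2]
    _ = 3 * (A * B) := by ring

theorem enorm_osc_le_of_transport {L : ℝ≥0} {t : ℝ} (ht : 0 ≤ t)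
    (hρ : ContDiff ℝ 1 (uncurry ρ)) (hu : Continuous (uncurry u))
    (hlip : ∀ s ∈ Icc 0 t, LipschitzWith L (u s))
    (htr : ∀ s ∈ Icc 0 t, ∀ x,
      deriv (fun τ => ρ τ x) s + (u s x).1 * pd1 (ρ s) x + (u s x).2 * pd2 (ρ s) x = 0)
    (hperρ : ∀ s ∈ Icc 0 t, Per (ρ s)) (hper₁ : ∀ s ∈ Icc 0 t, Per (c1 (u s)))
    (hper₂ : ∀ s ∈ Icc 0 t, Per (c2 (u s))) (x : Pt) :
    ‖osc (ρ t) x‖ₑ ≤ eLpNorm (osc (ρ 0)) ⊤ μΩ + 3 * ∫⁻ s in Ioc 0 t,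
      eLpNorm (fun x => (osc (c1 (u s)) x, osc (c2 (u s)) x)) ⊤ μΩ
        * eLpNorm (fun x => (pd1 (ρ s) x, pd2 (ρ s) x)) ⊤ μΩ := by
  obtain ⟨γ, rfl, hγ⟩ := exists_isIntegralCurveOn_Icc ht
    (fun y => (hu.comp (continuous_id.prodMk continuous_const)).continuousOn) hlip x
  set Ψ : ℝ → ℝ := fun s => hav (ρ s) (γ s)
  set Ψ' : ℝ → ℝ := fun s =>
    ∫ σ in (0:ℝ)..1, fderiv ℝ (uncurry ρ) (s, (σ, (γ s).2)) (1, (0, (u s (γ s)).2))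
  have hΨ : ∀ s ∈ Icc 0 t, HasDerivWithinAt Ψ (Ψ' s) (Icc 0 t) s :=
    fun s hs => hasDerivWithinAt_hav_comp hρ (hγ s hs)
  have hΨ' : ContinuousOn Ψ' (Icc 0 t) := by
    have hD : Continuous (fderiv ℝ (uncurry ρ)) := hρ.continuous_fderiv one_ne_zero
    have hΦ : Continuous fun p : ℝ × ℝ × ℝ =>
        ∫ σ in (0:ℝ)..1, fderiv ℝ (uncurry ρ) (p.1, (σ, p.2.1)) (1, (0, p.2.2)) :=
      intervalIntegral.continuous_parametric_intervalIntegral_of_continuous'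
        ((hD.comp (by fun_prop)).clm_apply (by fun_prop)) 0 1
    exact hΦ.comp_continuousOn (continuousOn_id.prodMk
      ((continuous_snd.comp_continuousOn hγ.continuousOn).prodMk (continuous_snd.comp_continuousOn
        (hu.comp_continuousOn (continuousOn_id.prodMk hγ.continuousOn)))))
  have hFTC : ∫ s in (0:ℝ)..t, Ψ' s = Ψ t - Ψ 0 :=
    intervalIntegral.integral_eq_sub_of_hasDeriv_right_of_le ht
      (fun s hs => (hΨ s hs).continuousWithinAt)
      (fun s hs => ((hΨ s (Ioo_subset_Icc_self hs)).hasDerivAt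
        (Icc_mem_nhds hs.1 hs.2)).hasDerivWithinAt)
      (hΨ'.intervalIntegrable_of_Icc ht)
  have hosc : osc (ρ t) (γ t) = osc (ρ 0) (γ 0) - (Ψ t - Ψ 0) := by
    simp only [osc, Ψ, apply_eq_of_isIntegralCurveOn ht (hρ.differentiable one_ne_zero) htr hγ]
    ring
  have hρ₀ : Continuous (ρ 0) := hρ.continuous.comp (continuous_const.prodMk continuous_id)
  rw [hosc]
  refine enorm_sub_le.trans (add_le_add (enorm_le_eLpNorm_top_of_periodic hρ₀.osc
    (hperρ 0 ⟨le_rfl, ht⟩).osc _) ?_)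
  rw [← hFTC, ← lintegral_const_mul' _ _ (by simp)]
  refine (enorm_intervalIntegral_le_lintegral ht).trans
    (setLIntegral_mono' measurableSet_Ioc fun s hs => ?_)
  have hs' : s ∈ Icc 0 t := Ioc_subset_Icc_self hs
  exact enorm_integral_fderiv_le_of_transport hρ hu (htr s hs') (hperρ s hs') (hper₁ s hs')
    (hper₂ s hs') _

end Transport

theorem stmt17 :
    ∃ C > (0:ℝ),
      ∀ (T : ℝ) (ρ : ℝ → Pt → ℝ) (u : ℝ → Pt → Pt) (P : ℝ → Pt → ℝ)
        (ρ₀ : Pt → ℝ) (u₀ : Pt → Pt),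
        0 ≤ T →
        IsHINSOn ρ u P ρ₀ u₀ (Icc 0 T) →
        ContDiff ℝ (⊤ : ℕ∞) (Function.uncurry ρ) →
        ContDiff ℝ (⊤ : ℕ∞) (Function.uncurry u) →
        ContDiff ℝ (⊤ : ℕ∞) (Function.uncurry P) →
        (∃ M : ℝ, ∀ t ∈ Icc (0:ℝ) T, ∀ x : Pt,
          |ρ t x| ≤ M ∧ |pd1 (ρ t) x| ≤ M ∧ |pd2 (ρ t) x| ≤ M) →
        (∃ L : ℝ≥0, ∀ t ∈ Icc (0:ℝ) T, LipschitzWith L (u t)) →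
        ∀ t ∈ Icc (0:ℝ) T,
          eLpNorm (fun x => osc (ρ t) x) ⊤ μΩ ≤
            eLpNorm (fun x => osc ρ₀ x) ⊤ μΩ +
              ENNReal.ofReal C *
                ∫⁻ s in Ioc (0:ℝ) t,
                  eLpNorm (fun x => (osc (c1 (u s)) x, osc (c2 (u s)) x)) ⊤ μΩ *
                    eLpNorm (fun x => (pd1 (ρ s) x, pd2 (ρ s) x)) ⊤ μΩ := by
  refine ⟨3, by norm_num, ?_⟩
  rintro T ρ u P ρ₀ u₀ - hH hρ hu - - ⟨L, hL⟩ t ht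
  have hsub : Icc 0 t ⊆ Icc 0 T := Icc_subset_Icc_right ht.2
  rw [ENNReal.ofReal_ofNat, ← hH.init_ρ]
  refine eLpNorm_exponent_top.trans_le
    (eLpNormEssSup_le_of_ae_enorm_bound (ae_of_all _ fun x => ?_))
  exact enorm_osc_le_of_transport ht.1 (hρ.of_le (by norm_cast)) hu.continuous
    (fun s hs => hL s (hsub hs)) (fun s hs => hH.transport s (hsub hs))
    (fun s hs => hH.per_ρ s (hsub hs)) (fun s hs => hH.per_u1 s (hsub hs))
    (fun s hs => hH.per_u2 s (hsub hs)) x
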